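/- For t ≥ 3, every resolving set S of M_t with |S ∩ V_2| = t − 1 satisfies |S| ≥ t − 1 + 2^{t−1}. -/

import Mathlib

/-! Since `S` contains only `t - 1` of the `v_i`, some `v_k` is missing. The string `u` and
`u` with bit `k` flipped are at distance 1 from every other string and at equal distance from
every `v_i` with `i ≠ k`, so only they themselves can resolve this pair. Hence `S` meets each of
the `2^(t-1)` pairs `{u, flip_k u}` in a string. -/

open SimpleGraph Function
open scoped Classical

/-- A set `S` is a resolving set of `G`: every pair of distinct vertices differ in
distance to some element of `S`. -/
def IsResolving {V : Type*} (G : SimpleGraph V) (S : Set V) : Prop :=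
  ∀ x y : V, x ≠ y → ∃ s ∈ S, G.dist s x ≠ G.dist s y

/-- A fault-tolerant resolving set: removing any single vertex leaves a resolving set. -/
def IsFTResolving {V : Type*} (G : SimpleGraph V) (S : Set V) : Prop :=
  ∀ s ∈ S, IsResolving G (S \ {s})

/-- The metric dimension of `G`. -/
noncomputable def metricDim {V : Type*} [Fintype V] (G : SimpleGraph V) : ℕ :=
  sInf {n | ∃ S : Finset V, IsResolving G ↑S ∧ S.card = n}

/-- The fault-tolerant metric dimension of `G`. -/
noncomputable def ftDim {V : Type*} [Fintype V] (G : SimpleGraph V) : ℕ :=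
  sInf {n | ∃ S : Finset V, IsFTResolving G ↑S ∧ S.card = n}

/-- `S` is a `k`-resolving set: every pair of distinct vertices is distinguished
by at least `k` vertices of `S`. -/
def IsKResolving {V : Type*} [Fintype V] (G : SimpleGraph V) (k : ℕ) (S : Finset V) : Prop :=
  ∀ x y : V, x ≠ y → k ≤ (S.filter (fun s => G.dist s x ≠ G.dist s y)).card

/-- The `k`-metric dimension of `G`. -/
noncomputable def kMetricDim {V : Type*} [Fintype V] (G : SimpleGraph V) (k : ℕ) : ℕ :=
  sInf {n | ∃ S : Finset V, IsKResolving G k S ∧ S.card = n}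

/-- The graph `M_t`: a clique on all binary strings of length `t`, together with
independent vertices `v_1, …, v_t`, where `v_i` is adjacent to exactly those strings
having `1` (`true`) at coordinate `i`. -/
def Mt (t : ℕ) : SimpleGraph ((Fin t → Bool) ⊕ Fin t) where
  Adj x y :=
    match x, y with
    | Sum.inl u, Sum.inl v => u ≠ v
    | Sum.inl u, Sum.inr i => u i = true
    | Sum.inr i, Sum.inl u => u i = true
    | Sum.inr _, Sum.inr _ => False
  symm := by
    constructor
    rintro (u | i) (v | j) h
    · exact h.symm
    · exact h
    · exact h
    · exact h
  loopless := by
    constructor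
    rintro (u | i) h
    · exact h rfl
    · exact h

open Sum Finset

section flipAt

variable {ι : Type*} [DecidableEq ι]

def flipAt (k : ι) (u : ι → Bool) : ι → Bool :=
  Function.update u k (!u k)

lemma flipAt_ne_self (k : ι) (u : ι → Bool) : flipAt k u ≠ u := fun h ↦ by
  simpa [flipAt] using congrFun h k

lemma flipAt_apply_of_ne {k i : ι} (h : i ≠ k) (u : ι → Bool) : flipAt k u i = u i :=
  Function.update_of_ne h _ _

@[simp]
lemma flipAt_flipAt (k : ι) (u : ι → Bool) : flipAt k (flipAt k u) = u := by
  simp [flipAt]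

lemma two_pow_card_le_two_mul_card_of_flipAt [Fintype ι] (k : ι) (L : Finset (ι → Bool))
    (hL : ∀ u, u ∈ L ∨ flipAt k u ∈ L) : 2 ^ Fintype.card ι ≤ 2 * #L := by
  have hcover : univ ⊆ L ∪ L.image (flipAt k) := fun u _ ↦ by
    rcases hL u with h | h
    · exact mem_union_left _ h
    · exact mem_union_right _ (mem_image.mpr ⟨_, h, flipAt_flipAt k u⟩)
  calc 2 ^ Fintype.card ι = #(univ : Finset (ι → Bool)) := by simp
    _ ≤ #L + #(L.image (flipAt k)) := (card_le_card hcover).trans (card_union_le _ _)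
    _ ≤ 2 * #L := by linarith [card_image_le (s := L) (f := flipAt k)]

end flipAt

namespace Mt

variable {t : ℕ}

lemma dist_inl_inl {u w : Fin t → Bool} (h : u ≠ w) : (Mt t).dist (inl u) (inl w) = 1 :=
  dist_eq_one_iff_adj.mpr h

lemma dist_inr_inl (i : Fin t) (u : Fin t → Bool) :
    (Mt t).dist (inr i) (inl u) = if u i then 1 else 2 := by
  cases hu : u i
  · set w := Function.update u i true
    have hiw : (Mt t).Adj (inr i) (inl w) := by simp [Mt, w]
    have hwu : (Mt t).Adj (inl w) (inl u) := fun h ↦ by simpa [w, hu] using congrFun h i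
    have hle : (Mt t).dist (inr i) (inl u) ≤ 2 := dist_le (hiw.toWalk.append hwu.toWalk)
    have hne1 : (Mt t).dist (inr i) (inl u) ≠ 1 := fun h ↦ by
      simpa [Mt, hu] using dist_eq_one_iff_adj.mp h
    have hne0 : (Mt t).dist (inr i) (inl u) ≠ 0 :=
      (Reachable.pos_dist_of_ne ⟨hiw.toWalk.append hwu.toWalk⟩ inr_ne_inl).ne'
    simp only [Bool.false_eq_true, if_false]
    omega
  · exact dist_eq_one_iff_adj.mpr hu

lemma dist_inl_flipAt_eq {k : Fin t} {u : Fin t → Bool} {s : (Fin t → Bool) ⊕ Fin t}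
    (hsu : s ≠ inl u) (hsf : s ≠ inl (flipAt k u)) (hsk : s ≠ inr k) :
    (Mt t).dist s (inl u) = (Mt t).dist s (inl (flipAt k u)) := by
  rcases s with z | i
  · rw [dist_inl_inl (by simpa using hsu), dist_inl_inl (by simpa using hsf)]
  · rw [dist_inr_inl, dist_inr_inl, flipAt_apply_of_ne (by simpa using hsk)]

lemma inl_mem_or_inl_flipAt_mem_of_isResolving {S : Set ((Fin t → Bool) ⊕ Fin t)}
    (hS : IsResolving (Mt t) S) {k : Fin t} (hk : inr k ∉ S) (u : Fin t → Bool) :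
    inl u ∈ S ∨ inl (flipAt k u) ∈ S := by
  by_contra! h
  obtain ⟨s, hs, hsd⟩ := hS _ _ (inl_injective.ne (flipAt_ne_self k u).symm)
  exact hsd (dist_inl_flipAt_eq (ne_of_mem_of_not_mem hs h.1) (ne_of_mem_of_not_mem hs h.2)
    (ne_of_mem_of_not_mem hs hk))

end Mt

lemma card_filter_isRight {α β : Type*} (S : Finset (α ⊕ β)) :
    #(S.filter (fun x => x.isRight = true)) = #S.toRight := by
  rw [← card_map (Embedding.inr : β ↪ α ⊕ β)]
  congr 1
  ext (a | b) <;> simp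

theorem stmt8 (t : ℕ) (ht : 3 ≤ t) (S : Finset ((Fin t → Bool) ⊕ Fin t))
    (hS : IsResolving (Mt t) ↑S)
    (hV2 : (S.filter (fun x => x.isRight = true)).card = t - 1) :
    t - 1 + 2 ^ (t - 1) ≤ S.card := by
  rw [card_filter_isRight] at hV2
  obtain ⟨k, -, hk⟩ : ∃ k ∈ univ, k ∉ S.toRight :=
    exists_mem_notMem_of_card_lt_card (by simp; omega)
  have hcover (u : Fin t → Bool) : u ∈ S.toLeft ∨ flipAt k u ∈ S.toLeft := by
    simpa using Mt.inl_mem_or_inl_flipAt_mem_of_isResolving hS (by simpa using hk) u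
  have hleft : 2 ^ t ≤ 2 * #S.toLeft := by
    simpa using two_pow_card_le_two_mul_card_of_flipAt k _ hcover
  have htwo : 2 ^ t = 2 * 2 ^ (t - 1) := by rw [← pow_succ']; congr 1; omega
  have := card_toLeft_add_card_toRight (u := S)
  omega
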